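/- arXiv:2603.15328 — 2 statements merged into one kernel-verified Lean document; each statement's English description precedes it below -/
import Mathlib

section
/- Let q_i be an increasing sequence of positive integers with q_{i+1} > q_i^i > 1, and let ε_i ↓ 0 be positive reals. Define A = ⋂_{i=1}^∞ {a ∈ [0,1] : dist(a, q_i^{-1}ℤ) < q_i^{-1-ε_i}}. Then the difference set A − A = {a − b : a, b ∈ A} satisfies: for every i, A − A is contained in the q_i^{-1-ε_i}·2-neighborhood of q_i^{-1}ℤ intersected with [−1,1], and hence the Lebesgue measure of A − A is at most 10 q_i^{-ε_i} for every i. -/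
open Pointwise MeasureTheory Filter Set

theorem stmt_0 (q : ℕ → ℕ) (ε : ℕ → ℝ)
    (hqmono : StrictMono q)
    (hq : ∀ i, 1 ≤ i → 1 < q i ^ i ∧ q i ^ i < q (i + 1))
    (hε : ∀ i, 0 < ε i) (hεanti : Antitone ε)
    (hεlim : Tendsto ε atTop (nhds 0))
    (A : Set ℝ)
    (hA : A = ⋂ i, ⋂ (_ : 1 ≤ i),
      {a ∈ Set.Icc (0:ℝ) 1 | ∃ n : ℤ, |a - (n : ℝ) / (q i : ℝ)| < (q i : ℝ) ^ (-(1 + ε i))}) :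
    (∀ i, 1 ≤ i → A - A ⊆
      Set.Icc (-1 : ℝ) 1 ∩ {x : ℝ | ∃ n : ℤ, |x - (n : ℝ) / (q i : ℝ)| < 2 * (q i : ℝ) ^ (-(1 + ε i))}) ∧
    (∀ i, 1 ≤ i → volume (A - A) ≤ ENNReal.ofReal (10 * (q i : ℝ) ^ (-(ε i)))) := by
  have hq2 : ∀ i, 1 ≤ i → 2 ≤ q i := by
    intro i hi
    by_contra h
    push_neg at h
    have h1 : q i ≤ 1 := by omega
    have := (hq i hi).1
    have : q i ^ i ≤ 1 ^ i := Nat.pow_le_pow_left h1 i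
    simp at this
    omega
  have key : ∀ i, 1 ≤ i → A - A ⊆
      Set.Icc (-1 : ℝ) 1 ∩ {x : ℝ | ∃ n : ℤ, |x - (n : ℝ) / (q i : ℝ)| < 2 * (q i : ℝ) ^ (-(1 + ε i))} := by
    intro i hi x hx
    obtain ⟨a, ha, b, hb, rfl⟩ := hx
    rw [hA] at ha hb
    simp only [Set.mem_iInter] at ha hb
    obtain ⟨⟨ha0, ha1⟩, n, hn⟩ := ha i hi
    obtain ⟨⟨hb0, hb1⟩, m, hm⟩ := hb i hi
    constructor
    · constructor <;> simp only [] <;> linarith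
    · refine ⟨n - m, ?_⟩
      have h1 : a - b - ((n : ℝ) - (m : ℝ)) / (q i : ℝ) =
          (a - (n : ℝ) / (q i : ℝ)) - (b - (m : ℝ) / (q i : ℝ)) := by ring
      have h2 := abs_sub (a - (n : ℝ) / (q i : ℝ)) (b - (m : ℝ) / (q i : ℝ))
      push_cast
      rw [h1]
      calc |(a - (n : ℝ) / (q i : ℝ)) - (b - (m : ℝ) / (q i : ℝ))|
          ≤ |a - (n : ℝ) / (q i : ℝ)| + |b - (m : ℝ) / (q i : ℝ)| := abs_sub _ _
        _ < 2 * (q i : ℝ) ^ (-(1 + ε i)) := by linarith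
  refine ⟨key, ?_⟩
  intro i hi
  have hQ2 : (2:ℝ) ≤ (q i : ℝ) := by exact_mod_cast hq2 i hi
  have hQ0 : (0:ℝ) < (q i : ℝ) := by linarith
  set Q : ℝ := (q i : ℝ) with hQ
  set δ : ℝ := Q ^ (-(1 + ε i)) with hδ
  set t : ℝ := Q ^ (-(ε i)) with ht
  have hδt : δ = t / Q := by
    rw [hδ, ht, show -(1 + ε i) = -(ε i) + (-1) by ring, Real.rpow_add hQ0,
      Real.rpow_neg_one]
    ring
  have hδ0 : 0 < δ := Real.rpow_pos_of_pos hQ0 _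
  have ht0 : 0 < t := Real.rpow_pos_of_pos hQ0 _
  by_cases hcase : (1:ℝ)/5 ≤ t
  · calc volume (A - A) ≤ volume (Set.Icc (-1:ℝ) 1) :=
        measure_mono ((key i hi).trans Set.inter_subset_left)
      _ = ENNReal.ofReal 2 := by rw [Real.volume_Icc]; norm_num
      _ ≤ ENNReal.ofReal (10 * t) := by
        apply ENNReal.ofReal_le_ofReal; linarith
  · push_neg at hcase
    have h2δ : 2 * δ < 1 / Q := by
      rw [hδt, show 2 * (t / Q) = (2 * t) / Q by ring]
      gcongr
      linarith
    have hcover : Set.Icc (-1:ℝ) 1 ∩ {x : ℝ | ∃ n : ℤ, |x - (n : ℝ) / Q| < 2 * δ} ⊆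
        ⋃ n ∈ Finset.Icc (-(q i : ℤ)) (q i : ℤ),
          Set.Ioo ((n:ℝ)/Q - 2*δ) ((n:ℝ)/Q + 2*δ) := by
      rintro x ⟨⟨hx1, hx2⟩, n, hn⟩
      have hxabs : |x| ≤ 1 := abs_le.2 ⟨hx1, hx2⟩
      have habs : |(n:ℝ)/Q| ≤ |x| + |x - (n:ℝ)/Q| := by
        have h := abs_sub_abs_le_abs_sub ((n:ℝ)/Q) x
        have h' : |(n:ℝ)/Q - x| = |x - (n:ℝ)/Q| := abs_sub_comm _ _
        linarith [abs_nonneg x]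
      have h3 : |(n:ℝ)/Q| < 1 + 1/Q := by linarith
      have h4 : |(n:ℝ)| < Q + 1 := by
        rw [abs_div, abs_of_pos hQ0] at h3
        have h6 := (div_lt_iff₀ hQ0).1 h3
        have h7 : (1 + 1/Q) * Q = Q + 1 := by field_simp
        linarith
      have h5 : |n| ≤ (q i : ℤ) := by
        have hc : ((|n| : ℤ) : ℝ) < ((q i : ℤ) : ℝ) + 1 := by push_cast; simpa using h4
        have hc' : (|n| : ℤ) < (q i : ℤ) + 1 := by exact_mod_cast hc
        omega
      refine Set.mem_iUnion₂.2 ⟨n, Finset.mem_Icc.2 ⟨(abs_le.1 h5).1, (abs_le.1 h5).2⟩, ?_⟩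
      rcases abs_lt.1 hn with ⟨hl, hr⟩
      exact ⟨by linarith, by linarith⟩
    have hcard : (Finset.Icc (-(q i : ℤ)) (q i : ℤ)).card = 2 * q i + 1 := by
      rw [Int.card_Icc]
      omega
    calc volume (A - A)
        ≤ volume (⋃ n ∈ Finset.Icc (-(q i : ℤ)) (q i : ℤ),
            Set.Ioo ((n:ℝ)/Q - 2*δ) ((n:ℝ)/Q + 2*δ)) :=
          measure_mono ((key i hi).trans hcover)
      _ ≤ ∑ n ∈ Finset.Icc (-(q i : ℤ)) (q i : ℤ),
            volume (Set.Ioo ((n:ℝ)/Q - 2*δ) ((n:ℝ)/Q + 2*δ)) :=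
          measure_biUnion_finset_le _ _
      _ = ∑ n ∈ Finset.Icc (-(q i : ℤ)) (q i : ℤ), ENNReal.ofReal (4*δ) := by
          apply Finset.sum_congr rfl
          intro n _
          rw [Real.volume_Ioo]
          congr 1
          ring
      _ = ((2 * q i + 1 : ℕ) : ENNReal) * ENNReal.ofReal (4*δ) := by
          rw [Finset.sum_const, hcard, nsmul_eq_mul]
      _ ≤ ENNReal.ofReal (10 * t) := by
          rw [show ((2 * q i + 1 : ℕ) : ENNReal) = ENNReal.ofReal ((2 * q i + 1 : ℕ) : ℝ) by
            rw [ENNReal.ofReal_natCast], ← ENNReal.ofReal_mul (by positivity)]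
          apply ENNReal.ofReal_le_ofReal
          have hc : ((2 * q i + 1 : ℕ) : ℝ) = 2 * Q + 1 := by push_cast [hQ]; ring
          rw [hc, hδt]
          rw [show (2 * Q + 1) * (4 * (t / Q)) = ((8 * Q + 4) / Q) * t by
            field_simp; ring]
          have h9 : (8 * Q + 4) / Q ≤ 10 := by rw [div_le_iff₀ hQ0]; linarith
          nlinarith
end

section
/- Let μ, ν be Borel probability measures on ℝ² and suppose E, F are Borel sets supporting μ, ν respectively. Suppose: (i) ∫ ‖d_*^y(μ_{good,y}) − d_*^y(μ)‖_{L¹(ℝ)} dν(y) < 1/100, where d_*^y denotes the pushforward under x ↦ |x − y| and μ_{good,y} is any family of finite signed measures/densities; and (ii) ∫ ‖d_*^y(μ_{good,y})‖²_{L²(ℝ)} dν(y) < ∞. If additionally 1 = ∫ (∫_{Δ_y(E)} d_*^y(μ)) dν(y), then there exists y ∈ supp ν with |Δ_y(E)| > 0, where Δ_y(E) = {|x − y| : x ∈ E} and |·| denotes Lebesgue measure on ℝ. -/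
open MeasureTheory ENNReal

theorem stmt_6 (μ ν : Measure (EuclideanSpace ℝ (Fin 2)))
    [IsProbabilityMeasure μ] [IsProbabilityMeasure ν]
    (E F : Set (EuclideanSpace ℝ (Fin 2))) (hE : MeasurableSet E) (hF : MeasurableSet F)
    (hμE : μ E = 1) (hνF : ν F = 1)
    (G : EuclideanSpace ℝ (Fin 2) → ℝ → ℝ) (hG : ∀ y, Measurable (G y))
    (err : EuclideanSpace ℝ (Fin 2) → ℝ) (herr0 : ∀ y, 0 ≤ err y)
    -- (i): the L¹ distance between d_*^y(μ_{good,y}) and d_*^y(μ) dominates all set differences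
    (herr : ∀ (y : EuclideanSpace ℝ (Fin 2)) (S : Set ℝ), MeasurableSet S →
      |((μ.map (fun x => dist x y)) S).toReal - ∫ t in S, G y t| ≤ err y)
    (herrint : Integrable err ν)
    (hL1 : ∫ y, err y ∂ν < 1 / 100)
    -- (ii): finiteness of ∫ ‖d_*^y(μ_{good,y})‖²_{L²} dν(y)
    (hL2 : ∫⁻ y, (∫⁻ t, ENNReal.ofReal ((G y t) ^ 2)) ∂ν < ⊤)
    -- 1 = ∫ (∫_{Δ_y(E)} d_*^y(μ)) dν(y)
    (hone : ∫⁻ y, (μ.map (fun x => dist x y)) ((fun x => dist x y) '' E) ∂ν = 1) :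
    ∃ y : EuclideanSpace ℝ (Fin 2), (∀ r : ℝ, 0 < r → 0 < ν (Metric.ball y r)) ∧
      0 < volume ((fun x => dist x y) '' E) := by
  by_contra hcon
  push_neg at hcon
  -- The set of points with a null ball around them is open and ν-null.
  set U : Set (EuclideanSpace ℝ (Fin 2)) := {y | ∃ r > 0, ν (Metric.ball y r) = 0} with hUdef
  have hνU : ν U = 0 := by
    choose! r hr hνr using fun y (hy : y ∈ U) => hy
    have hcover : U ⊆ ⋃ y : U, Metric.ball (y : EuclideanSpace ℝ (Fin 2)) (r y) := by
      intro y hy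
      exact Set.mem_iUnion.2 ⟨⟨y, hy⟩, Metric.mem_ball_self (hr y hy)⟩
    obtain ⟨T, hTc, hTU⟩ := TopologicalSpace.isOpen_iUnion_countable
      (fun y : U => Metric.ball (y : EuclideanSpace ℝ (Fin 2)) (r y))
      (fun y => Metric.isOpen_ball)
    have h0 : ν (⋃ y : U, Metric.ball (y : EuclideanSpace ℝ (Fin 2)) (r y)) = 0 := by
      rw [← hTU]
      refine (measure_biUnion_null_iff hTc).2 ?_
      intro i _
      exact hνr i i.2
    exact le_antisymm (h0 ▸ measure_mono hcover) zero_le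
  -- ν-a.e. y is in the support, hence by hcon the distance set is volume-null.
  have hae : ∀ᵐ y ∂ν, (μ.map (fun x => dist x y)) ((fun x => dist x y) '' E)
      ≤ ENNReal.ofReal (err y) := by
    refine (ae_iff.2 ?_ : ∀ᵐ y ∂ν, y ∉ U).mono ?_
    · exact measure_mono_null (fun y hy => not_not.mp hy) hνU
    · intro y hyU
      have hsupp : ∀ r : ℝ, 0 < r → 0 < ν (Metric.ball y r) := by
        intro r hrpos
        rcases eq_or_lt_of_le (zero_le : 0 ≤ ν (Metric.ball y r)) with h | h
        · exact absurd ⟨r, hrpos, h.symm⟩ hyU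
        · exact h
      have hvol : volume ((fun x => dist x y) '' E) = 0 :=
        le_antisymm (hcon y hsupp) zero_le
      obtain ⟨S, hsub, hSm, hS0⟩ := exists_measurable_superset_of_null hvol
      have hint0 : ∫ t in S, G y t = 0 := by
        rw [Measure.restrict_eq_zero.mpr hS0, integral_zero_measure]
      have hb := herr y S hSm
      rw [hint0, sub_zero, abs_of_nonneg ENNReal.toReal_nonneg] at hb
      have hmap : IsProbabilityMeasure (μ.map (fun x => dist x y)) :=
        Measure.isProbabilityMeasure_map ((Continuous.dist continuous_id continuous_const).measurable).aemeasurable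
      have hfin : (μ.map (fun x => dist x y)) S ≠ ⊤ := measure_ne_top _ _
      calc (μ.map (fun x => dist x y)) ((fun x => dist x y) '' E)
          ≤ (μ.map (fun x => dist x y)) S := measure_mono hsub
        _ = ENNReal.ofReal ((μ.map (fun x => dist x y)) S).toReal :=
            (ENNReal.ofReal_toReal hfin).symm
        _ ≤ ENNReal.ofReal (err y) := ENNReal.ofReal_le_ofReal hb
  have hle : (1 : ℝ≥0∞) ≤ ENNReal.ofReal (∫ y, err y ∂ν) := by
    calc (1 : ℝ≥0∞) = ∫⁻ y, (μ.map (fun x => dist x y)) ((fun x => dist x y) '' E) ∂ν :=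
          hone.symm
      _ ≤ ∫⁻ y, ENNReal.ofReal (err y) ∂ν := lintegral_mono_ae hae
      _ = ENNReal.ofReal (∫ y, err y ∂ν) :=
          (ofReal_integral_eq_lintegral_ofReal herrint (Filter.Eventually.of_forall herr0)).symm
  have : (1 : ℝ≥0∞) < 1 := by
    refine lt_of_le_of_lt hle ?_
    calc ENNReal.ofReal (∫ y, err y ∂ν) ≤ ENNReal.ofReal (1 / 100) :=
          ENNReal.ofReal_le_ofReal hL1.le
      _ < 1 := by norm_num
  exact absurd this (lt_irrefl _)
end
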